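/- Let p ≥ 11 be a prime number and let c(n) denote the coefficients of the q-expansion of η(pτ)^p/η(τ). Then there do not exist a nonzero constant a ∈ ℂ and multiplicative arithmetic functions M, N : ℕ → ℂ (each equal to 1 at 1 and satisfying f(jk) = f(j)f(k) for coprime j, k) such that c(n) = a·(M(n) − N(n)) for all n ≥ 1. That is, the Dirichlet series L_{Φ_p}(s) = ∑ c(n)n^{−s} admits no decomposition into a difference of two Euler products. -/

import Mathlib

/-!
Put `v = (p² − 1)/24`, so `v ≥ 5`. Since `c(n) = 0` for `n < v` and `a ≠ 0`, `M = N` on `[1, v)`.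
Modulo `X⁴` the factor `∏ (1 − X^{pm})^p` is `1` and `∏ (1 − X^m)⁻¹` is `1 + X + 2X² + 3X³`
(the partition numbers), so `c(v), …, c(v + 3)` are all nonzero. But one of `v, …, v + 3` is `2k`
with `k < v` odd, and there `M(2k) = M(2) M(k) = N(2) N(k) = N(2k)`, i.e. `c(2k) = 0`.
-/

open PowerSeries

/-- The product topology (X-adic topology) on `ℤ⟦X⟧`. -/
noncomputable instance : TopologicalSpace (PowerSeries ℤ) :=
  inferInstanceAs (TopologicalSpace ((Unit →₀ ℕ) → ℤ))

/-- The q-expansion `X^{(p²−1)/24} · ∏_{m=1}^∞ (1 − X^{pm})^p · (∏_{m=1}^∞ (1 − X^m))⁻¹`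
of the eta-product `η(pτ)^p/η(τ)`. -/
noncomputable def etaPhi (p : ℕ) : PowerSeries ℤ :=
  (X : PowerSeries ℤ) ^ ((p ^ 2 - 1) / 24) *
    (∏' m : ℕ+, (1 - (X : PowerSeries ℤ) ^ (p * (m : ℕ))) ^ p) *
    Ring.inverse (∏' m : ℕ+, (1 - (X : PowerSeries ℤ) ^ (m : ℕ)))

/-- `c p n`, the coefficient of `X^n` in the q-expansion of `η(pτ)^p/η(τ)`. -/
noncomputable def c (p n : ℕ) : ℤ := PowerSeries.coeff (R := ℤ) n (etaPhi p)

/-- `f : ℕ → ℂ` is a multiplicative arithmetic function: `f(1) = 1` and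
`f(jk) = f(j)f(k)` for coprime positive integers `j, k`. -/
def IsMultFn (f : ℕ → ℂ) : Prop :=
  f 1 = 1 ∧ ∀ j k : ℕ, 0 < j → 0 < k → Nat.Coprime j k → f (j * k) = f j * f k

open Filter

theorem X_pow_dvd_prod_sub_one {R ι : Type*} [CommRing R] {n : ℕ} {s : Finset ι}
    {f : ι → R⟦X⟧} (hf : ∀ i ∈ s, X ^ n ∣ f i - 1) : X ^ n ∣ ∏ i ∈ s, f i - 1 := by
  induction s using Finset.cons_induction with
  | empty => simp
  | cons a s ha ih =>
    rw [Finset.prod_cons,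
      show f a * ∏ i ∈ s, f i - 1 = f a * (∏ i ∈ s, f i - 1) + (f a - 1) by ring]
    exact dvd_add (dvd_mul_of_dvd_right (ih fun i hi => hf i (Finset.mem_cons_of_mem hi)) _)
      (hf a (Finset.mem_cons_self a s))

theorem X_pow_dvd_one_sub_X_pow_pow_sub_one {R : Type*} [CommRing R] (k n : ℕ) :
    (X : R⟦X⟧) ^ k ∣ (1 - X ^ k) ^ n - 1 := by
  simpa using sub_dvd_pow_sub_pow (1 - (X : R⟦X⟧) ^ k) 1 n

theorem X_pow_dvd_inverse_sub_of_X_pow_dvd_mul_sub_one {R : Type*} [CommRing R] {n : ℕ}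
    (hn : n ≠ 0) {F G : R⟦X⟧} (h : X ^ n ∣ F * G - 1) : X ^ n ∣ Ring.inverse F - G := by
  obtain ⟨Q, hQ⟩ := h
  have hF : IsUnit F := by
    refine isUnit_iff_constantCoeff.mpr (.of_mul_eq_one (constantCoeff G) ?_)
    simpa [hn, sub_eq_zero] using congrArg constantCoeff hQ
  exact ⟨-(Ring.inverse F * Q), by
    linear_combination -Ring.inverse F * hQ + G * Ring.inverse_mul_cancel F hF⟩

theorem isClosed_setOf_X_pow_dvd_sub (n : ℕ) (G : ℤ⟦X⟧) :
    IsClosed {F : ℤ⟦X⟧ | X ^ n ∣ F - G} := by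
  simp_rw [X_pow_dvd_iff, map_sub, sub_eq_zero, Set.ofPred_forall]
  exact isClosed_iInter fun i => isClosed_iInter fun _ =>
    isClosed_eq (WithPiTopology.continuous_coeff ℤ i) continuous_const

theorem multipliable_of_X_pow_dvd_sub_one {f : ℕ+ → ℤ⟦X⟧}
    (hf : ∀ m : ℕ+, X ^ (m : ℕ) ∣ f m - 1) : Multipliable f := by
  have hmul := WithPiTopology.multipliable_one_add_of_tendsto_order_atTop_nhds_top
    (R := ℤ) (f := fun m => f m - 1) <| ENat.tendsto_nhds_top_iff_natCast_lt.mpr fun n =>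
      eventually_atTop.mpr ⟨n.succPNat, fun m hm => lt_of_lt_of_le
        (by exact_mod_cast Nat.lt_of_succ_le hm) (nat_le_order _ _ (X_pow_dvd_iff.mp (hf m)))⟩
  simp only [add_sub_cancel] at hmul
  exact hmul

theorem X_pow_dvd_tprod_sub_prod {ι : Type*} {f : ι → ℤ⟦X⟧} (hf : Multipliable f) {n : ℕ}
    {s : Finset ι} (hs : ∀ i ∉ s, X ^ n ∣ f i - 1) : X ^ n ∣ ∏' i, f i - ∏ i ∈ s, f i := by
  classical
  refine (isClosed_setOf_X_pow_dvd_sub n _).mem_of_tendsto hf.hasProd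
    (eventually_ge_atTop s |>.mono fun t hst => ?_)
  rw [Set.mem_ofPred_eq, ← Finset.prod_sdiff hst,
    show (∏ i ∈ t \ s, f i) * ∏ i ∈ s, f i - ∏ i ∈ s, f i =
      (∏ i ∈ t \ s, f i - 1) * ∏ i ∈ s, f i by ring]
  exact dvd_mul_of_dvd_left
    (X_pow_dvd_prod_sub_one fun i hi => hs i (Finset.mem_sdiff.mp hi).2) _

theorem X_pow_four_dvd_tprod_one_sub_X_pow_mul_pow_sub_one {p : ℕ} (hp : 4 ≤ p) :
    X ^ 4 ∣ ∏' m : ℕ+, (1 - (X : ℤ⟦X⟧) ^ (p * (m : ℕ))) ^ p - 1 := by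
  have hfactor (m : ℕ+) {k : ℕ} (hk : k ≤ p * m) :
      X ^ k ∣ (1 - (X : ℤ⟦X⟧) ^ (p * (m : ℕ))) ^ p - 1 :=
    (pow_dvd_pow X hk).trans (X_pow_dvd_one_sub_X_pow_pow_sub_one _ _)
  simpa using X_pow_dvd_tprod_sub_prod (s := ∅)
    (multipliable_of_X_pow_dvd_sub_one fun m => hfactor m (Nat.le_mul_of_pos_left _ (by omega)))
    fun m _ => hfactor m (le_trans hp (Nat.le_mul_of_pos_right _ m.pos))

theorem X_pow_four_dvd_tprod_one_sub_X_pow_sub :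
    X ^ 4 ∣ ∏' m : ℕ+, (1 - (X : ℤ⟦X⟧) ^ (m : ℕ)) - (1 - X) * (1 - X ^ 2) * (1 - X ^ 3) := by
  have hfactor (m : ℕ+) {k : ℕ} (hk : k ≤ m) : X ^ k ∣ (1 - (X : ℤ⟦X⟧) ^ (m : ℕ)) - 1 :=
    (pow_dvd_pow X hk).trans (by simp)
  have h := X_pow_dvd_tprod_sub_prod (s := {1, 2, 3}) (n := 4)
    (multipliable_of_X_pow_dvd_sub_one fun m => hfactor m le_rfl) fun m hm => hfactor m <| by
      contrapose! hm
      simp only [Finset.mem_insert, Finset.mem_singleton, ← PNat.coe_inj, PNat.val_ofNat]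
      have := m.pos
      omega
  simpa [mul_assoc] using h

theorem X_pow_four_dvd_inverse_tprod_one_sub_X_pow_sub :
    X ^ 4 ∣ Ring.inverse (∏' m : ℕ+, (1 - (X : ℤ⟦X⟧) ^ (m : ℕ))) -
      (1 + X + 2 * X ^ 2 + 3 * X ^ 3) := by
  refine X_pow_dvd_inverse_sub_of_X_pow_dvd_mul_sub_one four_ne_zero ?_
  obtain ⟨Q, hQ⟩ := X_pow_four_dvd_tprod_one_sub_X_pow_sub
  exact ⟨Q * (1 + X + 2 * X ^ 2 + 3 * X ^ 3) - 4 - X + 2 * X ^ 2 + 4 * X ^ 3 + X ^ 4 - 3 * X ^ 5,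
    by linear_combination (1 + X + 2 * X ^ 2 + 3 * X ^ 3) * hQ⟩

theorem X_pow_four_dvd_tprod_mul_inverse_tprod_sub {p : ℕ} (hp : 4 ≤ p) :
    X ^ 4 ∣ (∏' m : ℕ+, (1 - (X : ℤ⟦X⟧) ^ (p * (m : ℕ))) ^ p) *
      Ring.inverse (∏' m : ℕ+, (1 - (X : ℤ⟦X⟧) ^ (m : ℕ))) - (1 + X + 2 * X ^ 2 + 3 * X ^ 3) := by
  obtain ⟨A, hA⟩ := X_pow_four_dvd_tprod_one_sub_X_pow_mul_pow_sub_one hp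
  obtain ⟨B, hB⟩ := X_pow_four_dvd_inverse_tprod_one_sub_X_pow_sub
  set G := Ring.inverse (∏' m : ℕ+, (1 - (X : ℤ⟦X⟧) ^ (m : ℕ)))
  exact ⟨A * G + B, by linear_combination G * hA + hB⟩

theorem c_eq_zero_of_lt {p m : ℕ} (hm : m < (p ^ 2 - 1) / 24) : c p m = 0 := by
  rw [c, etaPhi, mul_assoc, coeff_X_pow_mul', if_neg (by omega)]

theorem c_ne_zero_of_mem_Ico {p n : ℕ} (hp : 4 ≤ p)
    (hn : n ∈ Set.Ico ((p ^ 2 - 1) / 24) ((p ^ 2 - 1) / 24 + 4)) : c p n ≠ 0 := by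
  obtain ⟨t, ht, rfl⟩ : ∃ t < 4, n = (p ^ 2 - 1) / 24 + t :=
    ⟨n - (p ^ 2 - 1) / 24, by grind, by grind⟩
  have hcoeff := X_pow_dvd_iff.mp (X_pow_four_dvd_tprod_mul_inverse_tprod_sub hp) t ht
  rw [map_sub, sub_eq_zero] at hcoeff
  rw [c, etaPhi, mul_assoc, add_comm, coeff_X_pow_mul, hcoeff, ← map_ofNat (C (R := ℤ)) 2,
    ← map_ofNat (C (R := ℤ)) 3]
  interval_cases t <;> simp only [map_add, coeff_C_mul, coeff_X_pow, coeff_X, coeff_one] <;> norm_num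

theorem IsMultFn.exists_eq_of_eqOn_Ico {M N : ℕ → ℂ} (hM : IsMultFn M) (hN : IsMultFn N)
    {v : ℕ} (hv : 4 ≤ v) (h : Set.EqOn M N (Set.Ico 1 v)) :
    ∃ n ∈ Set.Ico v (v + 4), M n = N n := by
  obtain ⟨k, hk, hkv, hodd⟩ : ∃ k, 2 * k ∈ Set.Ico v (v + 4) ∧ k < v ∧ Odd k :=
    ⟨(v + (6 - v % 4) % 4) / 2, by grind, by grind, Nat.odd_iff.mpr (by grind)⟩
  have hcop : Nat.Coprime 2 k := Nat.coprime_two_left.mpr hodd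
  refine ⟨2 * k, hk, ?_⟩
  rw [hM.2 2 k two_pos hodd.pos hcop, hN.2 2 k two_pos hodd.pos hcop,
    h ⟨one_le_two, by omega⟩, h ⟨hodd.pos, hkv⟩]

theorem no_difference_decomposition_general (p : ℕ) (hp11 : 11 ≤ p) :
    ¬ ∃ (a : ℂ) (M N : ℕ → ℂ), a ≠ 0 ∧ IsMultFn M ∧ IsMultFn N ∧
      ∀ n : ℕ, 1 ≤ n → (c p n : ℂ) = a * (M n - N n) := by
  rintro ⟨a, M, N, ha, hM, hN, hc⟩
  have hv : 4 ≤ (p ^ 2 - 1) / 24 := by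
    have : 121 ≤ p ^ 2 := by nlinarith
    omega
  have heq : Set.EqOn M N (Set.Ico 1 ((p ^ 2 - 1) / 24)) := fun m hm => by
    have := hc m hm.1
    rw [c_eq_zero_of_lt hm.2, Int.cast_zero, eq_comm, mul_eq_zero, sub_eq_zero] at this
    exact this.resolve_left ha
  obtain ⟨n, hn, hMN⟩ := hM.exists_eq_of_eqOn_Ico hN hv heq
  have hcn := hc n (by grind)
  rw [hMN, sub_self, mul_zero] at hcn
  exact c_ne_zero_of_mem_Ico (by omega) hn (by exact_mod_cast hcn)

/-- For a prime `p ≥ 11`, the Dirichlet series `L_{Φ_p}(s) = ∑ c(n) n^{−s}` attached to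
`η(pτ)^p/η(τ)` admits no decomposition into a difference of two Euler products: there
are no nonzero constant `a` and multiplicative functions `M, N` with
`c(n) = a(M(n) − N(n))` for all `n ≥ 1`. -/
theorem no_difference_decomposition (p : ℕ) (hp : p.Prime) (hp11 : 11 ≤ p) :
    ¬ ∃ (a : ℂ) (M N : ℕ → ℂ), a ≠ 0 ∧ IsMultFn M ∧ IsMultFn N ∧
      ∀ n : ℕ, 1 ≤ n → (c p n : ℂ) = a * (M n - N n) :=
  no_difference_decomposition_general p hp11
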